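/- If f¹₁ and f²₁ both satisfy the coupled quadratic equilibrium equations ((3P−2)/2)(fᵖ₁)² + [((3P−2)/2)f^q₁ + (1−2P)ρᵖ − Pρ^q]fᵖ₁ + (1−P)f^q₁ρᵖ = 0 for p = 1,2, then their sum F = f¹₁ + f²₁ satisfies the single quadratic ((3P−2)/2)F² + (1−2P)(ρ¹+ρ²)F = 0. -/
import Mathlib


/-- Summation lemma: if `(f¹₁, f²₁)` solves the coupled two-population
equilibrium equations, then `F = f¹₁ + f²₁` solves the scalar quadratic
`((3P-2)/2)F² + (1-2P)(ρ¹+ρ²)F = 0`. -/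
theorem stmt_10 (P ρ1 ρ2 f1 f2 : ℝ) (hP : P ∈ Set.Icc (0:ℝ) 1)
    (hρ1 : 0 < ρ1) (hρ2 : 0 < ρ2)
    (h1 : (3*P - 2)/2 * f1^2 +
      ((3*P - 2)/2 * f2 + (1 - 2*P)*ρ1 - P*ρ2) * f1 + (1 - P)*f2*ρ1 = 0)
    (h2 : (3*P - 2)/2 * f2^2 +
      ((3*P - 2)/2 * f1 + (1 - 2*P)*ρ2 - P*ρ1) * f2 + (1 - P)*f1*ρ2 = 0) :
    (3*P - 2)/2 * (f1 + f2)^2 + (1 - 2*P)*(ρ1 + ρ2)*(f1 + f2) = 0 := by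
  linear_combination h1 + h2
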